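/- arXiv:2103.00921 — 6 statements merged into one kernel-verified Lean document; each statement's English description precedes it below -/
import Mathlib

section
/- Let α, μ, ζ, η be real parameters with α < 0. Then the sequence of gaps ω_{k+1}^− − ω_k^− tends to −∞ as the integer k tends to +∞. -/
/-- The frequency `ω_k^+` from the spectral analysis of the linearized coupled
KdV system (set to `0` when `k = 0`). -/
noncomputable def omegaP (α μ ζ η : ℝ) (k : ℤ) : ℝ :=
  if k = 0 then 0 else
    ((k : ℝ) ^ 3 / 2) *
      ((1 + α) - (ζ + μ) / (k : ℝ) ^ 2 +
        Real.sqrt (((1 - α) + (ζ - μ) / (k : ℝ) ^ 2) ^ 2 + 4 * η ^ 2 / (k : ℝ) ^ 4))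

/-- The frequency `ω_k^-` from the spectral analysis of the linearized coupled
KdV system (set to `0` when `k = 0`). -/
noncomputable def omegaM (α μ ζ η : ℝ) (k : ℤ) : ℝ :=
  if k = 0 then 0 else
    ((k : ℝ) ^ 3 / 2) *
      ((1 + α) - (ζ + μ) / (k : ℝ) ^ 2 -
        Real.sqrt (((1 - α) + (ζ - μ) / (k : ℝ) ^ 2) ^ 2 + 4 * η ^ 2 / (k : ℝ) ^ 4))

/-!
For `α ≤ 1` the square root in `ω_k^-` is `√((1 - α + x)² + y²)` with `x, y = O(k⁻²)`, and it
differs from `1 - α` by at most `|x| + |y|`. Hence `ω_k^- = α k³ + O(k)`, so the gap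
`ω_{k+1}^- - ω_k^-` is `α (3k² + 3k + 1) + O(k)`, a quadratic in `k` with leading coefficient `3α < 0`.
-/

open Filter

theorem abs_sqrt_add_sq_add_sq_sub_le {c : ℝ} (hc : 0 ≤ c) (x y : ℝ) :
    |√((c + x) ^ 2 + y ^ 2) - c| ≤ |x| + |y| := by
  have lower : c - |x| ≤ √((c + x) ^ 2 + y ^ 2) :=
    calc c - |x| ≤ |c + x| := by linarith [neg_abs_le x, le_abs_self (c + x)]
      _ ≤ √((c + x) ^ 2 + y ^ 2) := Real.abs_le_sqrt (by nlinarith)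
  have upper : √((c + x) ^ 2 + y ^ 2) ≤ c + |x| + |y| := by
    rw [Real.sqrt_le_left (by positivity)]
    nlinarith [abs_nonneg x, abs_nonneg y, sq_abs x, sq_abs y, le_abs_self x]
  rw [abs_le]
  constructor <;> linarith [abs_nonneg y]

theorem abs_omegaM_sub_cube_le {α : ℝ} (hα : α ≤ 1) (μ ζ η : ℝ) {k : ℤ} (hk : k ≠ 0) :
    |omegaM α μ ζ η k - α * k ^ 3| ≤ (|ζ + μ| + |ζ - μ| + 2 * |η|) * |(k : ℝ)| / 2 := by
  set x := (ζ - μ) / (k : ℝ) ^ 2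
  set y := 2 * η / (k : ℝ) ^ 2
  have hsplit : omegaM α μ ζ η k - α * k ^ 3 =
      -((k : ℝ) ^ 3 / 2 * (√((1 - α + x) ^ 2 + y ^ 2) - (1 - α))) - (ζ + μ) * k / 2 := by
    rw [omegaM, if_neg hk]
    have : 4 * η ^ 2 / (k : ℝ) ^ 4 = y ^ 2 := by ring
    rw [this]
    generalize √((1 - α + x) ^ 2 + y ^ 2) = s
    field_simp
    ring
  have hsqrt := abs_sqrt_add_sq_add_sq_sub_le (sub_nonneg.mpr hα) x y
  have hxy : |(k : ℝ) ^ 3 / 2| * (|x| + |y|) = (|ζ - μ| + 2 * |η|) * |(k : ℝ)| / 2 := by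
    simp only [x, y, abs_div, abs_mul, abs_pow, abs_two]
    field_simp
  calc |omegaM α μ ζ η k - α * k ^ 3|
      ≤ |(k : ℝ) ^ 3 / 2| * |√((1 - α + x) ^ 2 + y ^ 2) - (1 - α)| + |ζ + μ| * |(k : ℝ)| / 2 := by
        rw [hsplit]
        refine (abs_sub _ _).trans ?_
        simp [abs_mul, abs_div]
    _ ≤ |(k : ℝ) ^ 3 / 2| * (|x| + |y|) + |ζ + μ| * |(k : ℝ)| / 2 := by gcongr
    _ = (|ζ + μ| + |ζ - μ| + 2 * |η|) * |(k : ℝ)| / 2 := by rw [hxy]; ring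

theorem tendsto_quadratic_atBot {a : ℝ} (ha : a < 0) (b c : ℝ) :
    Tendsto (fun x : ℝ => a * x ^ 2 + b * x + c) atTop atBot := by
  have hlin : Tendsto (fun x : ℝ => a * x + b) atTop atBot :=
    tendsto_atBot_add_const_right _ b ((tendsto_const_mul_atBot_of_neg ha).mpr tendsto_id)
  refine (tendsto_atBot_add_const_right _ c (tendsto_id.atTop_mul_atBot₀ hlin)).congr fun x => ?_
  simp only [id]
  ring

theorem omegaM_gap_le {α : ℝ} (hα : α ≤ 1) (μ ζ η : ℝ) {k : ℤ} (hk : 0 < k) :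
    omegaM α μ ζ η (k + 1) - omegaM α μ ζ η k ≤
      3 * α * k ^ 2 + (3 * α + (|ζ + μ| + |ζ - μ| + 2 * |η|)) * k +
        (α + (|ζ + μ| + |ζ - μ| + 2 * |η|) / 2) := by
  have hk' : (0 : ℝ) < k := by exact_mod_cast hk
  have h₁ := abs_le.mp (abs_omegaM_sub_cube_le hα μ ζ η (k := k + 1) (by omega))
  have h₀ := abs_le.mp (abs_omegaM_sub_cube_le hα μ ζ η hk.ne')
  push_cast at h₁
  rw [abs_of_pos hk'] at h₀
  rw [abs_of_pos (by linarith : (0 : ℝ) < k + 1)] at h₁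
  linarith [h₀.1, h₁.2]

/-- If `α < 0` then the gaps `ω_{k+1}^- − ω_k^-` tend to `−∞` as `k → +∞`. -/
theorem omegaM_gap_tendsto_atBot (α μ ζ η : ℝ) (hα : α < 0) :
    Filter.Tendsto (fun k : ℤ => omegaM α μ ζ η (k + 1) - omegaM α μ ζ η k)
      Filter.atTop Filter.atBot := by
  set C := |ζ + μ| + |ζ - μ| + 2 * |η|
  have hbound := (tendsto_quadratic_atBot (by linarith : 3 * α < 0) (3 * α + C) (α + C / 2)).comp
    (tendsto_intCast_atTop_atTop (R := ℝ))
  refine tendsto_atBot_mono' _ ?_ hbound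
  filter_upwards [eventually_gt_atTop 0] with k hk
  exact omegaM_gap_le (by linarith) μ ζ η hk
end

section
/- Let α, μ, ζ, η be real parameters with α < 0, and let k'' be a fixed positive integer. Then |ω_{2(k'+k'')+1}^− − ω_{2k'}^+| tends to +∞ as |k'| tends to ∞ over the integers; that is, for every M > 0 there exists N such that |ω_{2(k'+k'')+1}^− − ω_{2k'}^+| ≥ M whenever |k'| ≥ N. -/
private lemma sqrt_close (a b c k : ℝ) (ha : 0 < a) (hc : 0 ≤ c) (hk : 1 ≤ k ^ 2) :
    |Real.sqrt ((a + b / k ^ 2) ^ 2 + c / k ^ 4) - a| * (a * k ^ 2)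
      ≤ 2 * a * |b| + b ^ 2 + c := by
  have hk0 : (0:ℝ) < k ^ 2 := lt_of_lt_of_le one_pos hk
  have hk4 : (0:ℝ) < k ^ 4 := by nlinarith
  set S := Real.sqrt ((a + b / k ^ 2) ^ 2 + c / k ^ 4) with hS
  have hargs : 0 ≤ (a + b / k ^ 2) ^ 2 + c / k ^ 4 := by positivity
  have hS0 : 0 ≤ S := Real.sqrt_nonneg _
  have hSsq : S ^ 2 = (a + b / k ^ 2) ^ 2 + c / k ^ 4 := Real.sq_sqrt hargs
  have key : |S - a| * a ≤ |S ^ 2 - a ^ 2| := by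
    have h1 : |S - a| * a ≤ |S - a| * (S + a) := by
      nlinarith [abs_nonneg (S - a)]
    have h2 : |S - a| * (S + a) = |S ^ 2 - a ^ 2| := by
      rw [← abs_of_pos (show (0:ℝ) < S + a by linarith), ← abs_mul]
      ring_nf
    linarith
  have hdiff : S ^ 2 - a ^ 2 = (2 * a * b + (b ^ 2 + c) / k ^ 2) / k ^ 2 := by
    rw [hSsq]; field_simp; ring
  have hbound : |S ^ 2 - a ^ 2| * k ^ 2 ≤ 2 * a * |b| + b ^ 2 + c := by
    rw [hdiff, abs_div, abs_of_pos hk0, div_mul_cancel₀ _ (ne_of_gt hk0)]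
    have h3 : |2 * a * b + (b ^ 2 + c) / k ^ 2| ≤ 2 * a * |b| + (b ^ 2 + c) / k ^ 2 := by
      calc |2 * a * b + (b ^ 2 + c) / k ^ 2| ≤ |2 * a * b| + |(b ^ 2 + c) / k ^ 2| :=
            abs_add_le _ _
        _ = 2 * a * |b| + (b ^ 2 + c) / k ^ 2 := by
            rw [abs_mul, abs_div, abs_of_nonneg (by positivity : (0:ℝ) ≤ b ^ 2 + c),
              abs_of_pos hk0, abs_of_pos (by linarith : (0:ℝ) < 2 * a)]
    have h4 : (b ^ 2 + c) / k ^ 2 ≤ b ^ 2 + c := by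
      rw [div_le_iff₀ hk0]; nlinarith [sq_nonneg b]
    linarith
  calc |S - a| * (a * k ^ 2) = (|S - a| * a) * k ^ 2 := by ring
    _ ≤ |S ^ 2 - a ^ 2| * k ^ 2 := by nlinarith
    _ ≤ 2 * a * |b| + b ^ 2 + c := hbound

/-- The error constant. -/
noncomputable def Cst (α μ ζ η : ℝ) : ℝ :=
  (|ζ + μ| + (2 * (1 - α) * |ζ - μ| + (ζ - μ) ^ 2 + 4 * η ^ 2) / (1 - α)) / 2

private lemma Cst_nonneg (α μ ζ η : ℝ) (hα : α < 0) : 0 ≤ Cst α μ ζ η := by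
  have h1 : (0:ℝ) < 1 - α := by linarith
  have : 0 ≤ 2 * (1 - α) * |ζ - μ| + (ζ - μ) ^ 2 + 4 * η ^ 2 := by positivity
  have : 0 ≤ (2 * (1 - α) * |ζ - μ| + (ζ - μ) ^ 2 + 4 * η ^ 2) / (1 - α) := by positivity
  unfold Cst
  have := abs_nonneg (ζ + μ)
  linarith

private lemma one_le_sq (k : ℤ) (hk : k ≠ 0) : 1 ≤ (k:ℝ) ^ 2 := by
  have h1 : (1:ℤ) ≤ |k| := Int.one_le_abs (by omega)
  have h2 : (1:ℝ) ≤ |(k:ℝ)| := by exact_mod_cast (by push_cast [← Int.cast_abs]; exact_mod_cast h1 : (1:ℝ) ≤ ((|k|:ℤ):ℝ))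
  nlinarith [abs_nonneg (k:ℝ), sq_abs (k:ℝ)]

private lemma omegaP_close (α μ ζ η : ℝ) (hα : α < 0) (k : ℤ) (hk : k ≠ 0) :
    |omegaP α μ ζ η k - (k:ℝ) ^ 3| ≤ Cst α μ ζ η * |(k:ℝ)| := by
  have ha : (0:ℝ) < 1 - α := by linarith
  have hk2 : (1:ℝ) ≤ (k:ℝ) ^ 2 := one_le_sq k hk
  have hk20 : (0:ℝ) < (k:ℝ) ^ 2 := lt_of_lt_of_le one_pos hk2
  set S := Real.sqrt (((1 - α) + (ζ - μ) / (k:ℝ) ^ 2) ^ 2 + 4 * η ^ 2 / (k:ℝ) ^ 4)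
    with hSdef
  set E := 2 * (1 - α) * |ζ - μ| + (ζ - μ) ^ 2 + 4 * η ^ 2 with hEdef
  have hsq := sqrt_close (1 - α) (ζ - μ) (4 * η ^ 2) (k:ℝ) ha (by positivity) hk2
  have hSa : |S - (1 - α)| ≤ E / ((1 - α) * (k:ℝ) ^ 2) := by
    rw [le_div_iff₀ (by positivity)]; exact hsq
  have hrw : omegaP α μ ζ η k - (k:ℝ) ^ 3
      = ((k:ℝ) ^ 3 / 2) * (-((ζ + μ) / (k:ℝ) ^ 2) + (S - (1 - α))) := by
    rw [omegaP, if_neg hk, ← hSdef]; ring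
  have habs : |omegaP α μ ζ η k - (k:ℝ) ^ 3|
      ≤ |(k:ℝ)| ^ 3 / 2 * (|ζ + μ| / (k:ℝ) ^ 2 + |S - (1 - α)|) := by
    rw [hrw, abs_mul]
    have h1 : |(k:ℝ) ^ 3 / 2| = |(k:ℝ)| ^ 3 / 2 := by
      rw [abs_div, abs_pow]; norm_num
    rw [h1]
    gcongr
    calc |-((ζ + μ) / (k:ℝ) ^ 2) + (S - (1 - α))|
        ≤ |-((ζ + μ) / (k:ℝ) ^ 2)| + |S - (1 - α)| := abs_add_le _ _
      _ = |ζ + μ| / (k:ℝ) ^ 2 + |S - (1 - α)| := by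
          rw [abs_neg, abs_div, abs_of_pos hk20]
  have hk3 : |(k:ℝ)| ^ 3 = |(k:ℝ)| * (k:ℝ) ^ 2 := by rw [← sq_abs]; ring
  have hE0 : 0 ≤ E := by positivity
  calc |omegaP α μ ζ η k - (k:ℝ) ^ 3|
      ≤ |(k:ℝ)| ^ 3 / 2 * (|ζ + μ| / (k:ℝ) ^ 2 + E / ((1 - α) * (k:ℝ) ^ 2)) := by
        refine le_trans habs ?_
        gcongr
    _ = Cst α μ ζ η * |(k:ℝ)| := by
        unfold Cst; rw [← hEdef, hk3]; field_simp

private lemma omegaM_close (α μ ζ η : ℝ) (hα : α < 0) (k : ℤ) (hk : k ≠ 0) :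
    |omegaM α μ ζ η k - α * (k:ℝ) ^ 3| ≤ Cst α μ ζ η * |(k:ℝ)| := by
  have ha : (0:ℝ) < 1 - α := by linarith
  have hk2 : (1:ℝ) ≤ (k:ℝ) ^ 2 := one_le_sq k hk
  have hk20 : (0:ℝ) < (k:ℝ) ^ 2 := lt_of_lt_of_le one_pos hk2
  set S := Real.sqrt (((1 - α) + (ζ - μ) / (k:ℝ) ^ 2) ^ 2 + 4 * η ^ 2 / (k:ℝ) ^ 4)
    with hSdef
  set E := 2 * (1 - α) * |ζ - μ| + (ζ - μ) ^ 2 + 4 * η ^ 2 with hEdef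
  have hsq := sqrt_close (1 - α) (ζ - μ) (4 * η ^ 2) (k:ℝ) ha (by positivity) hk2
  have hSa : |S - (1 - α)| ≤ E / ((1 - α) * (k:ℝ) ^ 2) := by
    rw [le_div_iff₀ (by positivity)]; exact hsq
  have hrw : omegaM α μ ζ η k - α * (k:ℝ) ^ 3
      = ((k:ℝ) ^ 3 / 2) * (-((ζ + μ) / (k:ℝ) ^ 2) - (S - (1 - α))) := by
    rw [omegaM, if_neg hk, ← hSdef]; ring
  have habs : |omegaM α μ ζ η k - α * (k:ℝ) ^ 3|
      ≤ |(k:ℝ)| ^ 3 / 2 * (|ζ + μ| / (k:ℝ) ^ 2 + |S - (1 - α)|) := by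
    rw [hrw, abs_mul]
    have h1 : |(k:ℝ) ^ 3 / 2| = |(k:ℝ)| ^ 3 / 2 := by
      rw [abs_div, abs_pow]; norm_num
    rw [h1]
    gcongr
    calc |-((ζ + μ) / (k:ℝ) ^ 2) - (S - (1 - α))|
        ≤ |-((ζ + μ) / (k:ℝ) ^ 2)| + |S - (1 - α)| := abs_sub _ _
      _ = |ζ + μ| / (k:ℝ) ^ 2 + |S - (1 - α)| := by
          rw [abs_neg, abs_div, abs_of_pos hk20]
  have hk3 : |(k:ℝ)| ^ 3 = |(k:ℝ)| * (k:ℝ) ^ 2 := by rw [← sq_abs]; ring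
  have hE0 : 0 ≤ E := by positivity
  calc |omegaM α μ ζ η k - α * (k:ℝ) ^ 3|
      ≤ |(k:ℝ)| ^ 3 / 2 * (|ζ + μ| / (k:ℝ) ^ 2 + E / ((1 - α) * (k:ℝ) ^ 2)) := by
        refine le_trans habs ?_
        gcongr
    _ = Cst α μ ζ η * |(k:ℝ)| := by
        unfold Cst; rw [← hEdef, hk3]; field_simp


set_option maxHeartbeats 1000000 in
/-- If `α < 0` and `k''` is a fixed positive integer, then
`|ω_{2(k'+k'')+1}^- − ω_{2k'}^+| → +∞` as `|k'| → ∞` over the integers. -/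
theorem gap_odd_even_tendsto_atTop (α μ ζ η : ℝ) (hα : α < 0)
    (k'' : ℤ) (hk'' : 0 < k'') :
    ∀ M : ℝ, 0 < M → ∃ N : ℕ, ∀ k' : ℤ, (N : ℤ) ≤ |k'| →
      M ≤ |omegaM α μ ζ η (2 * (k' + k'') + 1) - omegaP α μ ζ η (2 * k')| := by
  intro M hM
  have hC0 : 0 ≤ Cst α μ ζ η := Cst_nonneg α μ ζ η hα
  set C := Cst α μ ζ η with hC
  have hy1 : (1:ℝ) ≤ (k'':ℝ) := by exact_mod_cast hk''
  set y := (k'':ℝ) with hy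
  set C' := C * (2 * y + 5) with hC'
  have hC'0 : 0 ≤ C' := by
    have : (0:ℝ) < 2 * y + 5 := by linarith
    positivity
  refine ⟨⌈max (max M C') (y + 1)⌉₊ + 1, ?_⟩
  intro k' hk'
  set N : ℕ := ⌈max (max M C') (y + 1)⌉₊ + 1 with hN
  have hNr : max (max M C') (y + 1) ≤ (N:ℝ) := by
    have := Nat.le_ceil (max (max M C') (y + 1))
    have h2 : ((⌈max (max M C') (y + 1)⌉₊ : ℕ) : ℝ) ≤ (N:ℝ) := by
      rw [hN]; push_cast; linarith
    linarith
  have hxN : (N:ℝ) ≤ |(k':ℝ)| := by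
    rw [← Int.cast_abs]
    exact_mod_cast hk'
  set x := (k':ℝ) with hx
  have hN1 : (1:ℝ) ≤ (N:ℝ) := by
    rw [hN]; push_cast; linarith [Nat.cast_nonneg (α := ℝ) ⌈max (max M C') (y + 1)⌉₊]
  have hx1 : (1:ℝ) ≤ |x| := le_trans hN1 hxN
  have hxM : M ≤ |x| := le_trans (le_trans (le_max_left _ _) (le_trans (le_max_left _ _) hNr)) hxN
  have hxC' : C' ≤ |x| := le_trans (le_trans (le_max_right _ _) (le_trans (le_max_left _ _) hNr)) hxN
  have hxy : y + 1 ≤ |x| := le_trans (le_trans (le_max_right _ _) hNr) hxN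
  have hk'0 : k' ≠ 0 := by
    intro h
    subst h
    simp at hk' 
  have h2k : (2 * k' : ℤ) ≠ 0 := by omega
  have hj : (2 * (k' + k'') + 1 : ℤ) ≠ 0 := by omega
  have heM := omegaM_close α μ ζ η hα (2 * (k' + k'') + 1) hj
  have heP := omegaP_close α μ ζ η hα (2 * k') h2k
  push_cast at heM heP
  rw [← hC] at heM heP
  -- abbreviations
  set A := omegaM α μ ζ η (2 * (k' + k'') + 1) with hA
  set B := omegaP α μ ζ η (2 * k') with hB
  set c : ℝ := 2 * (x + y) + 1 with hc
  -- bound on |c| and |2x|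
  have hcb : |c| ≤ (2 * y + 3) * |x| := by
    have h1 : |c| ≤ 2 * |x| + (2 * y + 1) := by
      have : c = 2 * x + (2 * y + 1) := by rw [hc]; ring
      rw [this]
      calc |2 * x + (2 * y + 1)| ≤ |2 * x| + |2 * y + 1| := abs_add_le _ _
        _ = 2 * |x| + (2 * y + 1) := by
            rw [abs_of_pos (by linarith : (0:ℝ) < 2 * y + 1), abs_mul, abs_two]
    nlinarith
  have h2x : |2 * x| = 2 * |x| := by rw [abs_mul, abs_two]
  have heM' : |A - α * c ^ 3| ≤ C * ((2 * y + 3) * |x|) := by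
    refine le_trans heM (by nlinarith [abs_nonneg c] : C * |c| ≤ C * ((2 * y + 3) * |x|))
  have heP' : |B - (2 * x) ^ 3| ≤ C * (2 * |x|) := by
    rw [← h2x]; exact heP
  -- main term bound
  have hmain : 8 * |x| ^ 3 ≤ |α * c ^ 3 - (2 * x) ^ 3| := by
    rcases le_or_gt 0 x with hxp | hxn
    · have hxa : |x| = x := abs_of_nonneg hxp
      have hcpos : (0:ℝ) < c := by rw [hc]; nlinarith
      have hc3 : 0 ≤ c ^ 3 := by positivity
      have hneg : α * c ^ 3 ≤ 0 := mul_nonpos_of_nonpos_of_nonneg hα.le hc3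
      have h := neg_abs_le (α * c ^ 3 - (2 * x) ^ 3)
      rw [hxa]
      nlinarith
    · have hxa : |x| = -x := abs_of_neg hxn
      have hcneg : c < 0 := by rw [hc]; nlinarith [hxy, hxa]
      have hc3 : c ^ 3 < 0 := by nlinarith [sq_nonneg c, sq_nonneg (c - 1)]
      have hpos : 0 ≤ α * c ^ 3 := mul_nonneg_of_nonpos_of_nonpos hα.le hc3.le
      have h := le_abs_self (α * c ^ 3 - (2 * x) ^ 3)
      rw [hxa]
      nlinarith
  -- triangle inequality
  have htri : 8 * |x| ^ 3 - C * ((2 * y + 3) * |x|) - C * (2 * |x|) ≤ |A - B| := by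
    have h1 : |α * c ^ 3 - (2 * x) ^ 3|
        ≤ |A - B| + |A - α * c ^ 3| + |B - (2 * x) ^ 3| := by
      have h2 : α * c ^ 3 - (2 * x) ^ 3
          = (A - B) - (A - α * c ^ 3) + (B - (2 * x) ^ 3) := by ring
      rw [h2]
      calc |(A - B) - (A - α * c ^ 3) + (B - (2 * x) ^ 3)|
          ≤ |(A - B) - (A - α * c ^ 3)| + |B - (2 * x) ^ 3| := abs_add_le _ _
        _ ≤ |A - B| + |A - α * c ^ 3| + |B - (2 * x) ^ 3| := by
            linarith [abs_sub (A - B) (A - α * c ^ 3)]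
    linarith [hmain, heM', heP']
  -- final numeric step : 8 t^3 - C' t ≥ M  for  t = |x| ≥ max(M, C', 1)
  have hfin : M ≤ 8 * |x| ^ 3 - C * ((2 * y + 3) * |x|) - C * (2 * |x|) := by
    have hCC : C * ((2 * y + 3) * |x|) + C * (2 * |x|) = C' * |x| := by
      rw [hC']; ring
    have ht : (0:ℝ) ≤ |x| := abs_nonneg x
    nlinarith [mul_le_mul_of_nonneg_right hxC' ht, sq_nonneg (|x| - 1),
      mul_le_mul_of_nonneg_left hx1 ht, hxM]
  linarith
end

section
/- Let β₁, β₂, γ₁, γ₂ be real numbers with β₁ ≠ β₂ and |γ₁ − γ₂| ≤ (1/2)|β₁ − β₂|. Then for every integer k with |k| ≥ 1 and every real τ: (1 + |τ − (β₁k³ − γ₁k)|)·(1 + |τ − (β₂k³ − γ₂k)|) ≥ (1/2)·|β₁ − β₂|·|k|³. -/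
/-- Weight estimate for mixed-dispersion Bourgain norms: if `β₁ ≠ β₂` and
`|γ₁ − γ₂| ≤ |β₁ − β₂|/2`, then for every integer `k` with `|k| ≥ 1` and every
real `τ`, `⟨τ − φ^{β₁,γ₁}(k)⟩ ⟨τ − φ^{β₂,γ₂}(k)⟩ ≥ |β₁ − β₂| |k|³ / 2` where
`φ^{β,γ}(k) = βk³ − γk` and `⟨x⟩ = 1 + |x|`. -/
theorem bourgain_weight_estimate (β₁ β₂ γ₁ γ₂ : ℝ) (hβ : β₁ ≠ β₂)
    (hγ : |γ₁ - γ₂| ≤ |β₁ - β₂| / 2) (k : ℤ) (hk : 1 ≤ |k|) (τ : ℝ) :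
    (1 / 2) * |β₁ - β₂| * |(k : ℝ)| ^ 3 ≤
      (1 + |τ - (β₁ * (k : ℝ) ^ 3 - γ₁ * (k : ℝ))|) *
        (1 + |τ - (β₂ * (k : ℝ) ^ 3 - γ₂ * (k : ℝ))|) := by
  set x : ℝ := (k : ℝ)
  have hkx : (1 : ℝ) ≤ |x| := by
    have : ((1:ℤ):ℝ) ≤ ((|k|:ℤ):ℝ) := Int.cast_le.2 hk
    simpa [x, Int.cast_abs] using this
  set a := |τ - (β₁ * x ^ 3 - γ₁ * x)| with ha
  set b := |τ - (β₂ * x ^ 3 - γ₂ * x)| with hb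
  have hA : 0 ≤ a := abs_nonneg _
  have hB : 0 ≤ b := abs_nonneg _
  have h1 : |(β₁ - β₂) * x ^ 3 - (γ₁ - γ₂) * x| ≤ a + b := by
    have : (β₁ - β₂) * x ^ 3 - (γ₁ - γ₂) * x
        = (τ - (β₂ * x ^ 3 - γ₂ * x)) - (τ - (β₁ * x ^ 3 - γ₁ * x)) := by ring
    rw [this]
    exact (abs_sub _ _).trans (by rw [ha, hb]; ring_nf; exact le_of_eq rfl)
  have h2 : (1 / 2) * |β₁ - β₂| * |x| ^ 3 ≤ |(β₁ - β₂) * x ^ 3 - (γ₁ - γ₂) * x| := by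
    have hsub : |(β₁ - β₂) * x ^ 3| - |(γ₁ - γ₂) * x| ≤
        |(β₁ - β₂) * x ^ 3 - (γ₁ - γ₂) * x| := abs_sub_abs_le_abs_sub _ _
    have e1 : |(β₁ - β₂) * x ^ 3| = |β₁ - β₂| * |x| ^ 3 := by
      rw [abs_mul, abs_pow]
    have e2 : |(γ₁ - γ₂) * x| = |γ₁ - γ₂| * |x| := by rw [abs_mul]
    have hkk : |x| ≤ |x| ^ 3 := by nlinarith [abs_nonneg x, hkx, sq_nonneg (|x| - 1), sq_nonneg (|x| + 1)]
    have hγx : |γ₁ - γ₂| * |x| ≤ (|β₁ - β₂| / 2) * |x| ^ 3 := by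
      have := mul_le_mul hγ hkk (abs_nonneg x) (by positivity)
      linarith
    rw [e1, e2] at hsub
    linarith
  have h3 : a + b ≤ (1 + a) * (1 + b) := by nlinarith [mul_nonneg hA hB]
  linarith
end

section
/- Let β₁, β₂, γ₁, γ₂ be real numbers with β₁ ≠ β₂ and |γ₁ − γ₂| ≤ (1/2)|β₁ − β₂|, and let b be a real number with 1/3 < b ≤ 1/2. Then there exists a constant C > 0, depending only on β₁, β₂ and b, such that for every integer k and every real τ: |k| ≤ C·(1 + |τ − (β₁k³ − γ₁k)|)^b · (1 + |τ − (β₂k³ − γ₂k)|)^b. -/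
/-- Boundedness of the symbol in the mixed-dispersion derivative estimate:
if `β₁ ≠ β₂` and `1/3 < b ≤ 1/2`, there is a constant `C > 0` depending only on
`β₁, β₂, b` such that whenever `|γ₁ − γ₂| ≤ |β₁ − β₂|/2`, for all `k : ℤ` and
`τ : ℝ`, `|k| ≤ C ⟨τ − φ^{β₁,γ₁}(k)⟩^b ⟨τ − φ^{β₂,γ₂}(k)⟩^b`. -/
theorem bourgain_symbol_bounded (β₁ β₂ : ℝ) (hβ : β₁ ≠ β₂) (b : ℝ)
    (hb₁ : 1 / 3 < b) (hb₂ : b ≤ 1 / 2) :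
    ∃ C > (0 : ℝ), ∀ γ₁ γ₂ : ℝ, |γ₁ - γ₂| ≤ |β₁ - β₂| / 2 →
      ∀ (k : ℤ) (τ : ℝ),
        |(k : ℝ)| ≤ C * (1 + |τ - (β₁ * (k : ℝ) ^ 3 - γ₁ * (k : ℝ))|) ^ b *
          (1 + |τ - (β₂ * (k : ℝ) ^ 3 - γ₂ * (k : ℝ))|) ^ b := by
  set c : ℝ := |β₁ - β₂| / 2 with hc
  have hβne : β₁ - β₂ ≠ 0 := sub_ne_zero.mpr hβ
  have hcpos : 0 < c := by
    have := abs_pos.mpr hβne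
    positivity
  have hCpos : (0:ℝ) < (c ^ ((1:ℝ)/3))⁻¹ := by positivity
  refine ⟨(c ^ ((1:ℝ)/3))⁻¹, hCpos, ?_⟩
  intro γ₁ γ₂ hγ k τ
  set A : ℝ := τ - (β₁ * (k : ℝ) ^ 3 - γ₁ * (k : ℝ)) with hA
  set B : ℝ := τ - (β₂ * (k : ℝ) ^ 3 - γ₂ * (k : ℝ)) with hB
  have hA1 : (1:ℝ) ≤ 1 + |A| := by simp [abs_nonneg]
  have hB1 : (1:ℝ) ≤ 1 + |B| := by simp [abs_nonneg]
  have hP1 : (1:ℝ) ≤ (1 + |A|) * (1 + |B|) := by nlinarith [abs_nonneg A, abs_nonneg B]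
  have hPpos : (0:ℝ) < (1 + |A|) * (1 + |B|) := lt_of_lt_of_le one_pos hP1
  -- rewrite RHS as C * P^b
  have hprod : (1 + |A|) ^ b * (1 + |B|) ^ b = ((1 + |A|) * (1 + |B|)) ^ b := by
    rw [Real.mul_rpow (by positivity) (by positivity)]
  rcases eq_or_ne k 0 with hk | hk
  · subst hk
    simp only [Int.cast_zero, abs_zero]
    positivity
  · have hk1 : (1:ℝ) ≤ |(k:ℝ)| := by
      have : (1:ℤ) ≤ |k| := Int.one_le_abs hk
      exact_mod_cast (by exact_mod_cast this : (1:ℝ) ≤ |(k:ℤ)|)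
    have hkabs : |(k:ℝ)| = |((|k| : ℤ) : ℝ)| := by simp
    -- key: P ≥ c * |k|^3
    have hdiff : A - B = (β₂ - β₁) * (k:ℝ)^3 - (γ₂ - γ₁) * (k:ℝ) := by
      rw [hA, hB]; ring
    have habsdiff : |A - B| ≥ 2 * c * |(k:ℝ)|^3 - c * |(k:ℝ)| := by
      rw [hdiff]
      have h1 : |(β₂ - β₁) * (k:ℝ)^3| = 2 * c * |(k:ℝ)|^3 := by
        rw [abs_mul, abs_pow, hc, abs_sub_comm]; ring
      have h2 : |(γ₂ - γ₁) * (k:ℝ)| ≤ c * |(k:ℝ)| := by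
        rw [abs_mul]
        exact mul_le_mul_of_nonneg_right (by rw [abs_sub_comm]; exact hγ) (abs_nonneg _)
      calc 2 * c * |(k:ℝ)|^3 - c * |(k:ℝ)|
          ≤ |(β₂ - β₁) * (k:ℝ)^3| - |(γ₂ - γ₁) * (k:ℝ)| := by
            rw [h1]; linarith
        _ ≤ |(β₂ - β₁) * (k:ℝ)^3 - (γ₂ - γ₁) * (k:ℝ)| := abs_sub_abs_le_abs_sub _ _
    have hk13 : |(k:ℝ)| ≤ |(k:ℝ)|^3 := by
      calc |(k:ℝ)| = |(k:ℝ)|^1 := (pow_one _).symm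
        _ ≤ |(k:ℝ)|^3 := pow_le_pow_right₀ hk1 (by norm_num)
    have hkey : c * |(k:ℝ)|^3 ≤ (1 + |A|) * (1 + |B|) := by
      have h3 : |A - B| ≤ |A| + |B| := abs_sub _ _
      nlinarith [abs_nonneg A, abs_nonneg B, hcpos]
    -- conclude
    set P : ℝ := (1 + |A|) * (1 + |B|) with hPd
    have hcube : |(k:ℝ)|^3 ≤ P / c := (le_div_iff₀' hcpos).mpr hkey
    have hstep : |(k:ℝ)| ≤ (P / c) ^ ((1:ℝ)/3) := by
      have h1 : (|(k:ℝ)|^3 : ℝ) ^ ((1:ℝ)/3) ≤ (P / c) ^ ((1:ℝ)/3) :=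
        Real.rpow_le_rpow (by positivity) hcube (by norm_num)
      have h2 : (|(k:ℝ)|^3 : ℝ) ^ ((1:ℝ)/3) = |(k:ℝ)| := by
        rw [← Real.rpow_natCast |(k:ℝ)| 3, ← Real.rpow_mul (abs_nonneg _)]
        norm_num
      rwa [h2] at h1
    have hdivp : (P / c) ^ ((1:ℝ)/3) = P ^ ((1:ℝ)/3) / c ^ ((1:ℝ)/3) :=
      Real.div_rpow hPpos.le hcpos.le _
    have hPb : P ^ ((1:ℝ)/3) ≤ P ^ b :=
      Real.rpow_le_rpow_of_exponent_le hP1 hb₁.le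
    calc |(k:ℝ)| ≤ P ^ ((1:ℝ)/3) / c ^ ((1:ℝ)/3) := by rw [← hdivp]; exact hstep
      _ ≤ P ^ b / c ^ ((1:ℝ)/3) := by
          apply div_le_div_of_nonneg_right hPb (by positivity) |>.trans_eq rfl
      _ = (c ^ ((1:ℝ)/3))⁻¹ * (1 + |A|) ^ b * (1 + |B|) ^ b := by
          rw [mul_assoc, hprod, hPd]
          field_simp
end

section
/- Let β₁, β₂ be real numbers with β₂ ≠ 0 and β₁/β₂ < 1/4. Then there exist ε > 0 and δ > 0, depending only on β₁ and β₂, such that for all real γ₁, γ₂ with |γ₁| + |γ₂| ≤ ε and for all nonzero integers k₁, k₂, k₃ with k₁ + k₂ + k₃ = 0: 1 + |φ^{β₁,γ₁}(k₁) + φ^{β₂,γ₂}(k₂) + φ^{β₂,γ₂}(k₃)| ≥ δ·|k₁|·|k₂|·|k₃|. -/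
private lemma abs_add_ge' (a b : ℝ) : |a| - |b| ≤ |a + b| := by
  have h := abs_sub_abs_le_abs_sub a (-b)
  rw [abs_neg, sub_neg_eq_add] at h
  exact h

private lemma res_aux (β₁ β₂ : ℝ) (hβ₂ : 0 < β₂) (hratio : β₁ / β₂ < 1 / 4) :
    ∃ ε > (0 : ℝ), ∃ δ > (0 : ℝ), ∀ γ₁ γ₂ : ℝ, |γ₁| + |γ₂| ≤ ε →
      ∀ k₁ k₂ k₃ : ℤ, k₁ ≠ 0 → k₂ ≠ 0 → k₃ ≠ 0 → k₁ + k₂ + k₃ = 0 →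
        δ * (|(k₁ : ℝ)| * |(k₂ : ℝ)| * |(k₃ : ℝ)|) ≤
          1 + |(β₁ * (k₁ : ℝ) ^ 3 - γ₁ * (k₁ : ℝ)) +
                (β₂ * (k₂ : ℝ) ^ 3 - γ₂ * (k₂ : ℝ)) +
                (β₂ * (k₃ : ℝ) ^ 3 - γ₂ * (k₃ : ℝ))| := by
  have h1 : 0 < β₂ - 4 * β₁ := by
    have := (div_lt_iff₀ hβ₂).mp hratio
    linarith
  set c := min (β₂ - 4 * β₁) (3 * β₂) with hcdef
  have hc0 : 0 < c := lt_min h1 (by linarith)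
  have hc1 : c ≤ β₂ - 4 * β₁ := min_le_left _ _
  have hc2 : c ≤ 3 * β₂ := min_le_right _ _
  refine ⟨c / 2, by positivity, c / 2, by positivity, ?_⟩
  intro γ₁ γ₂ hγ k₁ k₂ k₃ hk₁ hk₂ hk₃ hsum
  have hsumR : (k₁ : ℝ) + k₂ + k₃ = 0 := by exact_mod_cast hsum
  have hk3 : (k₃ : ℝ) = -(k₁ : ℝ) - (k₂ : ℝ) := by linarith
  have hx1 : 1 ≤ |(k₂ : ℝ)| := by exact_mod_cast Int.one_le_abs hk₂
  have hy1 : 1 ≤ |(k₃ : ℝ)| := by exact_mod_cast Int.one_le_abs hk₃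
  have hz1 : 1 ≤ |(k₁ : ℝ)| := by exact_mod_cast Int.one_le_abs hk₁
  have hxy1 : 1 ≤ |(k₂ : ℝ) * (k₃ : ℝ)| := by
    rw [abs_mul]; nlinarith
  have hxy0 : (k₂ : ℝ) * (k₃ : ℝ) ≠ 0 :=
    mul_ne_zero (by exact_mod_cast hk₂) (by exact_mod_cast hk₃)
  have hz2 : (k₁ : ℝ) ^ 2 = ((k₂ : ℝ) + (k₃ : ℝ)) ^ 2 := by
    have : (k₁ : ℝ) = -((k₂ : ℝ) + (k₃ : ℝ)) := by linarith
    rw [this]; ring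
  -- lower bound on the quadratic factor without γ's
  have hQ0 : c * |(k₂ : ℝ) * (k₃ : ℝ)| ≤
      |(β₁ - β₂) * (k₁ : ℝ) ^ 2 + 3 * β₂ * ((k₂ : ℝ) * (k₃ : ℝ))| := by
    rcases hxy0.lt_or_gt with hneg | hpos
    · rw [le_abs]
      right
      rw [abs_of_neg hneg]
      nlinarith [sq_nonneg ((k₁ : ℝ)), hc2, h1, hβ₂, hneg]
    · rw [le_abs]
      right
      rw [abs_of_pos hpos]
      nlinarith [sq_nonneg ((k₂ : ℝ) - (k₃ : ℝ)), hz2, hc1, hpos, h1, hβ₂]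
  -- incorporate the γ perturbation
  have hd : |γ₂ - γ₁| ≤ c / 2 := by
    have := abs_sub γ₂ γ₁
    linarith [this, hγ]
  have hQ : (c / 2) * |(k₂ : ℝ) * (k₃ : ℝ)| ≤
      |(β₁ - β₂) * (k₁ : ℝ) ^ 2 + 3 * β₂ * ((k₂ : ℝ) * (k₃ : ℝ)) + (γ₂ - γ₁)| := by
    have h3 := abs_add_ge' ((β₁ - β₂) * (k₁ : ℝ) ^ 2 + 3 * β₂ * ((k₂ : ℝ) * (k₃ : ℝ))) (γ₂ - γ₁)
    nlinarith [h3, hQ0, hd, hxy1, hc0]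
  have hH : (β₁ * (k₁ : ℝ) ^ 3 - γ₁ * (k₁ : ℝ)) +
      (β₂ * (k₂ : ℝ) ^ 3 - γ₂ * (k₂ : ℝ)) + (β₂ * (k₃ : ℝ) ^ 3 - γ₂ * (k₃ : ℝ)) =
      (k₁ : ℝ) * ((β₁ - β₂) * (k₁ : ℝ) ^ 2 + 3 * β₂ * ((k₂ : ℝ) * (k₃ : ℝ)) + (γ₂ - γ₁)) := by
    rw [hk3]; ring
  rw [hH, abs_mul]
  have := mul_le_mul_of_nonneg_left hQ (abs_nonneg (k₁ : ℝ))
  rw [abs_mul] at this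
  nlinarith [this, hz1, hc0, abs_nonneg ((k₂ : ℝ)), abs_nonneg ((k₃ : ℝ))]

/-- Resonance estimate (δ-significance): if `β₂ ≠ 0` and `β₁/β₂ < 1/4`, there
exist `ε, δ > 0` depending only on `β₁, β₂` such that for all `γ₁, γ₂` with
`|γ₁| + |γ₂| ≤ ε` and all nonzero integers `k₁, k₂, k₃` with `k₁ + k₂ + k₃ = 0`,
`1 + |φ^{β₁,γ₁}(k₁) + φ^{β₂,γ₂}(k₂) + φ^{β₂,γ₂}(k₃)| ≥ δ |k₁| |k₂| |k₃|`,
where `φ^{β,γ}(k) = βk³ − γk`. -/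
theorem resonance_delta_significant (β₁ β₂ : ℝ) (hβ₂ : β₂ ≠ 0)
    (hratio : β₁ / β₂ < 1 / 4) :
    ∃ ε > (0 : ℝ), ∃ δ > (0 : ℝ), ∀ γ₁ γ₂ : ℝ, |γ₁| + |γ₂| ≤ ε →
      ∀ k₁ k₂ k₃ : ℤ, k₁ ≠ 0 → k₂ ≠ 0 → k₃ ≠ 0 → k₁ + k₂ + k₃ = 0 →
        δ * (|(k₁ : ℝ)| * |(k₂ : ℝ)| * |(k₃ : ℝ)|) ≤
          1 + |(β₁ * (k₁ : ℝ) ^ 3 - γ₁ * (k₁ : ℝ)) +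
                (β₂ * (k₂ : ℝ) ^ 3 - γ₂ * (k₂ : ℝ)) +
                (β₂ * (k₃ : ℝ) ^ 3 - γ₂ * (k₃ : ℝ))| := by
  rcases hβ₂.lt_or_gt with h | h
  · have hratio' : (-β₁) / (-β₂) < 1 / 4 := by rwa [neg_div_neg_eq]
    obtain ⟨ε, hε, δ, hδ, hmain⟩ := res_aux (-β₁) (-β₂) (by linarith) hratio'
    refine ⟨ε, hε, δ, hδ, ?_⟩
    intro γ₁ γ₂ hγ k₁ k₂ k₃ hk₁ hk₂ hk₃ hsum
    have hγ' : |(-γ₁)| + |(-γ₂)| ≤ ε := by simpa [abs_neg] using hγ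
    have := hmain (-γ₁) (-γ₂) hγ' k₁ k₂ k₃ hk₁ hk₂ hk₃ hsum
    have heq : ((-β₁) * (k₁ : ℝ) ^ 3 - (-γ₁) * (k₁ : ℝ)) +
        ((-β₂) * (k₂ : ℝ) ^ 3 - (-γ₂) * (k₂ : ℝ)) +
        ((-β₂) * (k₃ : ℝ) ^ 3 - (-γ₂) * (k₃ : ℝ)) =
        -((β₁ * (k₁ : ℝ) ^ 3 - γ₁ * (k₁ : ℝ)) +
          (β₂ * (k₂ : ℝ) ^ 3 - γ₂ * (k₂ : ℝ)) +
          (β₂ * (k₃ : ℝ) ^ 3 - γ₂ * (k₃ : ℝ))) := by ring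
    rw [heq, abs_neg] at this
    exact this
  · exact res_aux β₁ β₂ h hratio
end

section
/- Let 𝕋 = ℝ/2πℤ with Lebesgue measure and let f ∈ L²(𝕋; ℂ) be such that its Fourier coefficients f̂(k) := (1/2π)∫_𝕋 f(x) e^{−ikx} dx vanish for every negative integer k. If f = 0 almost everywhere on some nonempty open subset ω ⊆ 𝕋, then f = 0 almost everywhere on 𝕋. -/
/-!
Write `e = fourier 1`, which embeds the circle into the unit circle of `ℂ`, and let
`G z = ∫ g e / (e - z)` be the Cauchy transform of `g`. For `‖z‖ > 1` the Laurent coefficients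
of `G` are the integrals `∫ g e ^ (n + 1)`, so `G` vanishes there when these vanish. If `g = 0`
on the open set `ω`, then `G` is holomorphic off the closed proper arc `e '' ωᶜ`, whose
complement is connected; hence `G` vanishes everywhere off the arc, and in particular
`∫ g = G 0 = 0`. Applied to `g · e⁻ⁿ` by downward induction on `n`, this kills every Fourier
coefficient, and an `L²` function whose Fourier coefficients all vanish is zero.
-/

open MeasureTheory

instance : Fact ((0 : ℝ) < 2 * Real.pi) := ⟨by positivity⟩

open Metric Set Filter

theorem hasSum_div_sub_of_norm_lt {w z : ℂ} (hwz : ‖w‖ < ‖z‖) (a : ℂ) :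
    HasSum (fun n : ℕ => -(a * w ^ n) / z ^ (n + 1)) (a / (w - z)) := by
  have hz : z ≠ 0 := norm_pos_iff.1 ((norm_nonneg w).trans_lt hwz)
  have hzw : z - w ≠ 0 := sub_ne_zero.2 fun h => hwz.ne (h ▸ rfl)
  have hgeom := (hasSum_geometric_of_norm_lt_one (ξ := w / z)
    (by rwa [norm_div, div_lt_one (norm_pos_iff.2 hz)])).mul_left (-a / z)
  have hterms : (fun n : ℕ => -(a * w ^ n) / z ^ (n + 1)) = fun n => -a / z * (w / z) ^ n := by
    funext n; rw [div_pow]; field_simp; ring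
  have hlim : a / (w - z) = -a / z * (1 - w / z)⁻¹ := by
    rw [one_sub_div hz, inv_div, ← neg_sub z w, div_neg]
    field_simp
  rwa [hterms, hlim]

section CauchyTransform

variable {X : Type*} [MeasurableSpace X] {μ : Measure X} {φ g : X → ℂ}

noncomputable def cauchyTransform (μ : Measure X) (φ g : X → ℂ) (z : ℂ) : ℂ :=
  ∫ x, g x / (φ x - z) ∂μ

theorem differentiableOn_cauchyTransform {K : Set ℂ} (hK : IsClosed K)
    (hφ : AEStronglyMeasurable φ μ) (hg : Integrable g μ)
    (hgK : ∀ᵐ x ∂μ, g x ≠ 0 → φ x ∈ K) :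
    DifferentiableOn ℂ (cauchyTransform μ φ g) Kᶜ := by
  intro z₀ hz₀
  obtain ⟨ε, hε, hball⟩ := isOpen_iff.mp hK.isOpen_compl z₀ hz₀
  set s := ball z₀ (ε / 2)
  have hsep : ∀ᵐ x ∂μ, ∀ z ∈ s, g x = 0 ∨ ε / 2 ≤ ‖φ x - z‖ := by
    filter_upwards [hgK] with x hx z hz
    refine or_iff_not_imp_left.2 fun hgx => ?_
    have hφx : ε ≤ dist (φ x) z₀ := not_lt.1 fun h => hball h (hx hgx)
    have hzs : dist z z₀ < ε / 2 := hz
    rw [← dist_eq_norm]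
    linarith [dist_triangle (φ x) z z₀]
  have hbound (k : ℕ) : ∀ᵐ x ∂μ, ∀ z ∈ s, ‖g x / (φ x - z) ^ k‖ ≤ ‖g x‖ / (ε / 2) ^ k := by
    filter_upwards [hsep] with x hx z hz
    rcases hx z hz with hgx | hdist
    · simp [hgx]
    · rw [norm_div, norm_pow]
      gcongr
  have hderiv : ∀ᵐ x ∂μ, ∀ z ∈ s,
      HasDerivAt (fun z => g x / (φ x - z)) (g x / (φ x - z) ^ 2) z := by
    filter_upwards [hsep] with x hx z hz
    rcases hx z hz with hgx | hdist
    · simpa [hgx] using hasDerivAt_const z (0 : ℂ)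
    · have hne : φ x - z ≠ 0 := norm_pos_iff.1 (by linarith)
      exact ((hasDerivAt_const z (g x)).div ((hasDerivAt_id z).const_sub (φ x)) hne).congr_deriv
        (by simp)
  have hmeas (k : ℕ) (z : ℂ) : AEStronglyMeasurable (fun x => g x / (φ x - z) ^ k) μ :=
    (hg.aemeasurable.div ((hφ.aemeasurable.sub_const z).pow_const k)).aestronglyMeasurable
  have hint : Integrable (fun x => g x / (φ x - z₀)) μ := by
    refine (hg.norm.div_const (ε / 2)).mono' (by simpa using hmeas 1 z₀) ?_
    filter_upwards [hbound 1] with x hx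
    simpa using hx z₀ (mem_ball_self (by positivity))
  exact (hasDerivAt_integral_of_dominated_loc_of_deriv_le (ball_mem_nhds z₀ (by positivity))
    (.of_forall fun z => by simpa using hmeas 1 z) hint (hmeas 2 z₀) (hbound 2)
    (hg.norm.div_const _) hderiv).2.differentiableAt.differentiableWithinAt

theorem hasSum_cauchyTransform (hφ : AEStronglyMeasurable φ μ) (hg : Integrable g μ)
    (hφ1 : ∀ᵐ x ∂μ, ‖φ x‖ ≤ 1) {z : ℂ} (hz : 1 < ‖z‖) :
    HasSum (fun n : ℕ => -(∫ x, g x * φ x ^ n ∂μ) / z ^ (n + 1)) (cauchyTransform μ φ g z) := by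
  have hF_int (n : ℕ) : Integrable (fun x => -(g x * φ x ^ n) / z ^ (n + 1)) μ :=
    ((hg.mul_bdd (hφ.pow n) (c := 1) (by
      filter_upwards [hφ1] with x hx
      simpa [norm_pow] using pow_le_one₀ (norm_nonneg _) hx)).neg).div_const _
  have hF_norm (n : ℕ) : ∫ x, ‖-(g x * φ x ^ n) / z ^ (n + 1)‖ ∂μ
      ≤ (∫ x, ‖g x‖ ∂μ) * ‖z‖⁻¹ ^ (n + 1) := by
    rw [← integral_mul_const]
    refine integral_mono_ae (hF_int n).norm (hg.norm.mul_const _) ?_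
    filter_upwards [hφ1] with x hx
    rw [norm_div, norm_neg, norm_mul, norm_pow, norm_pow, inv_pow, ← div_eq_mul_inv]
    gcongr
    exact mul_le_of_le_one_right (norm_nonneg _) (pow_le_one₀ (norm_nonneg _) hx)
  have hsum := hasSum_integral_of_summable_integral_norm hF_int
    (Summable.of_nonneg_of_le (fun n => integral_nonneg fun x => norm_nonneg _) hF_norm
      (((summable_nat_add_iff 1).2 (summable_geometric_of_lt_one (by positivity)
        (inv_lt_one_of_one_lt₀ hz))).mul_left _))
  have hlim : cauchyTransform μ φ g z = ∫ x, ∑' n : ℕ, -(g x * φ x ^ n) / z ^ (n + 1) ∂μ := by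
    refine integral_congr_ae ?_
    filter_upwards [hφ1] with x hx
    exact ((hasSum_div_sub_of_norm_lt (hx.trans_lt hz) (g x)).tsum_eq).symm
  simpa only [hlim, integral_div, integral_neg] using hsum

end CauchyTransform

theorem isPreconnected_compl_closedBall_zero_one : IsPreconnected (closedBall (0 : ℂ) 1)ᶜ := by
  have himage : (closedBall (0 : ℂ) 1)ᶜ = Complex.exp '' {w | 0 < w.re} := by
    ext z
    simp only [mem_compl_iff, mem_closedBall, dist_zero_right, not_le, mem_image, mem_ofPred_eq]
    constructor
    · intro hz
      refine ⟨Complex.log z, ?_, Complex.exp_log (norm_pos_iff.1 (one_pos.trans hz))⟩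
      rw [Complex.log_re]
      exact Real.log_pos hz
    · rintro ⟨w, hw, rfl⟩
      rwa [Complex.norm_exp, Real.one_lt_exp_iff]
  rw [himage]
  exact (convex_halfSpace_re_gt 0).isPreconnected.image _ Complex.continuous_exp.continuousOn

theorem isPreconnected_compl_of_subset_sphere {K : Set ℂ} (hK : K ⊆ sphere 0 1) {w : ℂ}
    (hw : w ∈ sphere (0 : ℂ) 1) (hwK : w ∉ K) : IsPreconnected Kᶜ := by
  set S := sphere (0 : ℂ) 1 \ K
  have hin : IsPreconnected (ball 0 1 ∪ S) := by
    refine (convex_ball (0 : ℂ) 1).isPreconnected.subset_closure subset_union_left ?_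
    rw [closure_ball 0 one_ne_zero]
    exact union_subset ball_subset_closedBall (sdiff_subset.trans sphere_subset_closedBall)
  have hout : IsPreconnected ((closedBall 0 1)ᶜ ∪ S) := by
    refine isPreconnected_compl_closedBall_zero_one.subset_closure subset_union_left ?_
    rw [closure_compl, interior_closedBall 0 one_ne_zero]
    refine union_subset (compl_subset_compl.2 ball_subset_closedBall) fun z hz hzball => ?_
    exact (mem_sphere.1 hz.1).not_lt hzball
  have hcompl : Kᶜ = (ball 0 1 ∪ S) ∪ ((closedBall 0 1)ᶜ ∪ S) := by
    ext z
    simp only [S, mem_compl_iff, mem_union, mem_ball, mem_closedBall, Set.mem_sdiff,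
      not_le]
    constructor
    · intro hzK
      rcases lt_trichotomy (dist z 0) 1 with h | h | h
      · exact Or.inl (Or.inl h)
      · exact Or.inl (Or.inr ⟨h, hzK⟩)
      · exact Or.inr (Or.inl h)
    · rintro ((h | ⟨-, h⟩) | (h | ⟨-, h⟩)) hzK
      · exact h.ne (mem_sphere.1 (hK hzK))
      · exact h hzK
      · exact h.ne' (mem_sphere.1 (hK hzK))
      · exact h hzK
  rw [hcompl]
  exact hin.union w (Or.inr ⟨hw, hwK⟩) (Or.inr ⟨hw, hwK⟩) hout

theorem norm_fourier_apply {T : ℝ} (n : ℤ) (x : AddCircle T) : ‖fourier n x‖ = 1 := by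
  simp [Circle.norm_coe]

theorem image_fourier_one_subset_sphere {T : ℝ} (s : Set (AddCircle T)) :
    ⇑(fourier 1) '' s ⊆ sphere (0 : ℂ) 1 := by
  rintro _ ⟨x, -, rfl⟩
  simpa using norm_fourier_apply 1 x

theorem fourier_one_pow {T : ℝ} (x : AddCircle T) (n : ℕ) :
    (fourier 1 x : ℂ) ^ n = fourier n x := by
  induction n with
  | zero => simp
  | succ n ih => rw [pow_succ, ih, ← fourier_add, Nat.cast_succ]

theorem MeasureTheory.Integrable.mul_fourier {T : ℝ} {μ : Measure (AddCircle T)}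
    {g : AddCircle T → ℂ} (hg : Integrable g μ) (k : ℤ) :
    Integrable (fun x => g x * fourier k x) μ :=
  hg.mul_bdd (fourier k).continuous.aestronglyMeasurable
    (.of_forall fun x => (norm_fourier_apply k x).le)

section AddCircle

variable {T : ℝ} [hT : Fact (0 < T)] {μ : Measure (AddCircle T)} {g : AddCircle T → ℂ}

theorem injective_fourier_one : Function.Injective (⇑(fourier 1) : AddCircle T → ℂ) := by
  intro x y hxy
  simp only [fourier_one] at hxy
  exact AddCircle.injective_toCircle hT.out.ne' (Subtype.coe_injective hxy)

theorem isPreconnected_compl_image_fourier_one {ω : Set (AddCircle T)} (hω : ω.Nonempty) :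
    IsPreconnected (⇑(fourier 1) '' ωᶜ)ᶜ := by
  obtain ⟨x₀, hx₀⟩ := hω
  refine isPreconnected_compl_of_subset_sphere (image_fourier_one_subset_sphere _)
    (w := fourier 1 x₀) (by simpa using norm_fourier_apply 1 x₀) ?_
  rintro ⟨x, hx, hxx₀⟩
  exact hx (injective_fourier_one hxx₀ ▸ hx₀)

theorem integral_eq_zero_of_integral_mul_fourier_succ_eq_zero (hg : Integrable g μ)
    {ω : Set (AddCircle T)} (hω : IsOpen ω) (hω_ne : ω.Nonempty)
    (hgω : ∀ᵐ x ∂μ.restrict ω, g x = 0) (hpos : ∀ n : ℕ, ∫ x, g x * fourier (n + 1) x ∂μ = 0) :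
    ∫ x, g x ∂μ = 0 := by
  set e : AddCircle T → ℂ := ⇑(fourier 1)
  set K := e '' ωᶜ
  have hK_closed : IsClosed K := (hω.isClosed_compl.isCompact.image (fourier 1).continuous).isClosed
  have hK_sphere : K ⊆ sphere 0 1 := image_fourier_one_subset_sphere _
  set G := cauchyTransform μ e fun x => g x * e x
  have hG_diff : DifferentiableOn ℂ G Kᶜ := by
    refine differentiableOn_cauchyTransform hK_closed (fourier 1).continuous.aestronglyMeasurable
      (hg.mul_fourier 1) ?_
    filter_upwards [(ae_restrict_iff' hω.measurableSet).1 hgω] with x hx hgx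
    exact ⟨x, fun hxω => hgx (by rw [hx hxω, zero_mul]), rfl⟩
  have hG_ext : EqOn G 0 (closedBall 0 1)ᶜ := by
    intro z hz
    rw [mem_compl_iff, mem_closedBall, dist_zero_right, not_le] at hz
    refine (hasSum_cauchyTransform (φ := e) (g := fun x => g x * e x)
      (fourier 1).continuous.aestronglyMeasurable (hg.mul_fourier 1)
      (.of_forall fun x => (norm_fourier_apply 1 x).le) hz).unique ?_
    have hterm (n : ℕ) : ∫ x, g x * e x * e x ^ n ∂μ = 0 := by
      simp only [e, mul_assoc, fourier_one_pow, ← fourier_add]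
      rw [add_comm]
      exact hpos n
    simp only [hterm, neg_zero, zero_div, Pi.zero_apply]
    exact hasSum_zero
  have h2 : (2 : ℂ) ∈ (closedBall 0 1)ᶜ := by norm_num
  have hG_zero : EqOn G 0 Kᶜ :=
    (hG_diff.analyticOnNhd hK_closed.isOpen_compl).eqOn_zero_of_preconnected_of_eventuallyEq_zero
      (isPreconnected_compl_image_fourier_one hω_ne)
      (fun hK2 => by simpa using hK_sphere hK2)
      (eventually_of_mem (isClosed_closedBall.isOpen_compl.mem_nhds h2) hG_ext)
  calc ∫ x, g x ∂μ = G 0 := integral_congr_ae (.of_forall fun x => by simp [e])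
    _ = 0 := hG_zero fun hK0 => by simpa using hK_sphere hK0

theorem integral_mul_fourier_eq_zero_of_pos (hg : Integrable g μ) {ω : Set (AddCircle T)}
    (hω : IsOpen ω) (hω_ne : ω.Nonempty) (hgω : ∀ᵐ x ∂μ.restrict ω, g x = 0)
    (hpos : ∀ k : ℤ, 0 < k → ∫ x, g x * fourier k x ∂μ = 0) (k : ℤ) :
    ∫ x, g x * fourier k x ∂μ = 0 := by
  suffices h : ∀ n : ℕ, ∀ k : ℤ, -(n : ℤ) < k → ∫ x, g x * fourier k x ∂μ = 0 from
    h (k.natAbs + 1) k (by omega)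
  intro n
  induction n with
  | zero => exact fun k hk => hpos k (by simpa using hk)
  | succ n ih =>
    intro k hk
    obtain rfl | hk := (by omega : k = -n ∨ -(n : ℤ) < k)
    -- multiplying by `fourier (-n)` shifts the spectrum down by `n`
    · refine integral_eq_zero_of_integral_mul_fourier_succ_eq_zero (hg.mul_fourier _) hω hω_ne
        (by filter_upwards [hgω] with x hx; rw [hx, zero_mul]) fun m => ?_
      simp only [mul_assoc, ← fourier_add]
      exact ih _ (by omega)
    · exact ih k hk

theorem ae_eq_zero_of_integral_mul_fourier_eq_zero {f : AddCircle T → ℂ} (hf : MemLp f 2)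
    (h : ∀ k : ℤ, ∫ x, f x * fourier k x = 0) : f =ᵐ[volume] 0 := by
  have hf' := hf.haarAddCircle
  have hcoeff (n : ℤ) : fourierCoeff (hf'.toLp f) n = 0 := by
    rw [fourierCoeff_congr_ae hf'.coeFn_toLp, fourierCoeff, AddCircle.integral_haarAddCircle]
    simp_rw [smul_eq_mul, mul_comm (fourier (-n) _), h, smul_zero]
  have hzero : hf'.toLp f = 0 :=
    fourierBasis.repr.injective (by ext n; simp [fourierBasis_repr, hcoeff])
  have hae : f =ᵐ[AddCircle.haarAddCircle] 0 := by
    filter_upwards [hf'.coeFn_toLp, Lp.coeFn_zero ℂ 2 AddCircle.haarAddCircle] with x hx hx0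
    rw [← hx, hzero, hx0]
  rw [AddCircle.volume_eq_smul_haarAddCircle]
  exact Measure.ae_smul_measure hae _

end AddCircle

/-- Uniqueness for functions with only nonnegative frequencies: if
`f ∈ L²(𝕋;ℂ)` has Fourier coefficients `f̂(k) = (1/2π) ∫ f(x) e^{-ikx} dx`
vanishing for all `k < 0`, and `f = 0` a.e. on a nonempty open set `ω ⊆ 𝕋`,
then `f = 0` a.e. on `𝕋`. -/
theorem hardy_space_unique_continuation (f : AddCircle (2 * Real.pi) → ℂ)
    (hf : MemLp f 2 volume)
    (hcoef : ∀ k : ℤ, k < 0 →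
      (1 / (2 * Real.pi) : ℂ) *
        (∫ x : AddCircle (2 * Real.pi), f x * fourier (-k) x) = 0)
    (ω : Set (AddCircle (2 * Real.pi))) (hω_open : IsOpen ω) (hω_ne : ω.Nonempty)
    (hzero : ∀ᵐ x ∂(volume.restrict ω), f x = 0) :
    ∀ᵐ x ∂(volume : Measure (AddCircle (2 * Real.pi))), f x = 0 := by
  have hpos (k : ℤ) (hk : 0 < k) : ∫ x, f x * fourier k x = 0 := by
    simpa [Real.pi_ne_zero] using hcoef (-k) (by omega)
  exact ae_eq_zero_of_integral_mul_fourier_eq_zero hf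
    (integral_mul_fourier_eq_zero_of_pos (hf.integrable one_le_two) hω_open hω_ne hzero hpos)
end
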